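/- Let H = H_1 ⊗ H_2 ⊗ ⋯ ⊗ H_w be a tensor product of finite-dimensional complex inner product spaces and Z ⊆ H a subspace. Fix 1 ≤ j ≤ w and ε > 0, and suppose that for each i = 1, …, j−1 there exists a subspace V_{[1,i]} ⊆ H_{[1,i]} with dim V_{[1,i]} ≤ V such that ‖P_{V_{[1,i]} ⊗ H_{[i+1,w]}} z‖² ≥ 1−α for every unit vector z ∈ Z. Let Y ⊆ H_{[1,j]} be a subspace with ‖P_{Y ⊗ H_{[j+1,w]}} z‖ ≥ 1−δ for every unit vector z ∈ Z, and let Trim_ε(Y) = trim_ε^{[1,1]} ∘ trim_ε^{[1,2]} ∘ ⋯ ∘ trim_ε^{[1,j−1]}(Y). Then for every unit vector z ∈ Z, ‖P_{Trim_ε(Y) ⊗ H_{[j+1,w]}} z‖ ≥ 1 − δ − (j−1)(√(εV) + √α). -/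

import Mathlib

noncomputable section

/-- Index type of the block of sites `k` with `a ≤ k < b` (sites numbered `0, …, w-1`,
site `k` having local dimension `n k`). -/
abbrev BlkIdx {w : ℕ} (n : Fin w → ℕ) (a b : ℕ) : Type :=
  (k : {k : Fin w // a ≤ k.val ∧ k.val < b}) → Fin (n k.1)

/-- The Hilbert space `H_{[a+1,b]}` of the block of sites `k` with `a ≤ k < b`. -/
abbrev HS {w : ℕ} (n : Fin w → ℕ) (a b : ℕ) : Type :=
  EuclideanSpace ℂ (BlkIdx n a b)

/-- Concatenation of block indices. -/
def comb {w : ℕ} (n : Fin w → ℕ) {a b c : ℕ} (x : BlkIdx n a b) (y : BlkIdx n b c) :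
    BlkIdx n a c := fun k =>
  if h : k.1.val < b then x ⟨k.1, k.2.1, h⟩ else y ⟨k.1, Nat.le_of_not_lt h, k.2.2⟩

/-- Restriction of a block index to a lower sub-block. -/
def lowP {w : ℕ} (n : Fin w → ℕ) {a b c : ℕ} (hbc : b ≤ c) (f : BlkIdx n a c) :
    BlkIdx n a b := fun k => f ⟨k.1, k.2.1, lt_of_lt_of_le k.2.2 hbc⟩

/-- Restriction of a block index to an upper sub-block. -/
def highP {w : ℕ} (n : Fin w → ℕ) {a b c : ℕ} (hab : a ≤ b) (f : BlkIdx n a c) :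
    BlkIdx n b c := fun k => f ⟨k.1, le_trans hab k.2.1, k.2.2⟩

/-- The tensor `u ⊗ v` of vectors on two adjacent blocks (the inner product of the
concatenated block is determined by `⟨u⊗v, u'⊗v'⟩ = ⟨u,u'⟩·⟨v,v'⟩`). -/
def tmulB {w : ℕ} (n : Fin w → ℕ) {a b c : ℕ} (hab : a ≤ b) (hbc : b ≤ c)
    (u : HS n a b) (v : HS n b c) : HS n a c :=
  WithLp.toLp 2 (fun f => u (lowP n hbc f) * v (highP n hab f))

/-- The subspace `V ⊗ H_{[b+1,c]}` of `H_{[a+1,c]}`, for `V ⊆ H_{[a+1,b]}`. -/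
def extS {w : ℕ} (n : Fin w → ℕ) {a b c : ℕ} (hab : a ≤ b) (hbc : b ≤ c)
    (V : Submodule ℂ (HS n a b)) : Submodule ℂ (HS n a c) :=
  Submodule.span ℂ {x | ∃ v ∈ V, ∃ u : HS n b c, x = tmulB n hab hbc v u}

/-- The operator `X ⊗ id` on `H_{[a+1,c]}`, for an operator `X` on `H_{[a+1,b]}`. -/
def extOp {w : ℕ} (n : Fin w → ℕ) {a b c : ℕ} (hab : a ≤ b) (hbc : b ≤ c)
    (X : HS n a b →ₗ[ℂ] HS n a b) : HS n a c →ₗ[ℂ] HS n a c :=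
  Matrix.toEuclideanLin (Matrix.of fun f g =>
    Matrix.toEuclideanLin.symm X (lowP n hbc f) (lowP n hbc g) *
      (if highP n hab f = highP n hab g then 1 else 0))

/-- The partial trace over the sites `b, …, c-1` of an operator on `H_{[a+1,c]}`:
the unique operator `ρ` on `H_{[a+1,b]}` with `tr(ρ·X) = tr(M·(X ⊗ id))` for all `X`. -/
def ptr {w : ℕ} (n : Fin w → ℕ) {a c : ℕ} (b : ℕ) (M : HS n a c →ₗ[ℂ] HS n a c) :
    HS n a b →ₗ[ℂ] HS n a b :=
  Matrix.toEuclideanLin (Matrix.of fun x y =>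
    ∑ r : BlkIdx n b c, Matrix.toEuclideanLin.symm M (comb n x r) (comb n y r))

/-- The orthogonal projection onto a subspace, as a linear operator on the ambient space. -/
def projL {E : Type*} [NormedAddCommGroup E] [InnerProductSpace ℂ E] [FiniteDimensional ℂ E]
    (S : Submodule ℂ E) : E →ₗ[ℂ] E :=
  (S.subtypeL.comp (Submodule.orthogonalProjectionOnto S)).toLinearMap

/-- The span of the eigenvectors of `ρ` whose eigenvalue is a real number `≥ ε`. -/
def specGE {E : Type*} [NormedAddCommGroup E] [InnerProductSpace ℂ E] [FiniteDimensional ℂ E]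
    (ρ : E →ₗ[ℂ] E) (ε : ℝ) : Submodule ℂ E :=
  ⨆ c : {c : ℝ // ε ≤ c}, Module.End.eigenspace ρ ((c : ℝ) : ℂ)

/-- The trimming `trim_ε^{[1,i]}(Y)` of a subspace `Y ⊆ H_{[1,j]}` at the cut `i`:
the image of `Y` under `P₊ ⊗ id`, where `P₊ = 1_{[ε,∞)}(tr_{[i+1,j]}(P_Y))`. -/
def trimAt {w : ℕ} (n : Fin w → ℕ) (j : ℕ) (ε : ℝ) (i : ℕ) (hij : i ≤ j)
    (Y : Submodule ℂ (HS n 0 j)) : Submodule ℂ (HS n 0 j) :=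
  Y.map (extOp n (Nat.zero_le i) hij (projL (specGE (ptr n i (projL Y)) ε)))

/-- `trimSeq n j ε Y c` applies the trims at the cuts `j-1, j-2, …, j-c` (in this order)
to `Y ⊆ H_{[1,j]}`; thus `trimSeq n j ε Y (j-1)` is
`Trim_ε(Y) = trim_ε^{[1,1]} ∘ ⋯ ∘ trim_ε^{[1,j-1]}(Y)`. -/
def trimSeq {w : ℕ} (n : Fin w → ℕ) (j : ℕ) (ε : ℝ) (Y : Submodule ℂ (HS n 0 j)) :
    ℕ → Submodule ℂ (HS n 0 j)
  | 0 => Y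
  | c + 1 => trimAt n j ε (j - 1 - c) (by omega) (trimSeq n j ε Y c)

namespace TrimAux

variable {w : ℕ} {n : Fin w → ℕ} {a b c : ℕ}

theorem lowP_comb (hbc : b ≤ c) (x : BlkIdx n a b) (y : BlkIdx n b c) :
    lowP n hbc (comb n x y) = x := by
  funext k; simp [lowP, comb, k.2.2]

theorem highP_comb (hab : a ≤ b) (x : BlkIdx n a b) (y : BlkIdx n b c) :
    highP n hab (comb n x y) = y := by
  funext k; simp [highP, comb, Nat.not_lt.2 k.2.1]

theorem comb_lowP_highP (hab : a ≤ b) (hbc : b ≤ c) (f : BlkIdx n a c) :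
    comb n (lowP n hbc f) (highP n hab f) = f := by
  funext k
  by_cases h : k.1.val < b <;> simp [comb, lowP, highP, h]

/-- `BlkIdx n a c ≃ BlkIdx n a b × BlkIdx n b c`. -/
def combEquiv (n : Fin w → ℕ) (hab : a ≤ b) (hbc : b ≤ c) :
    BlkIdx n a c ≃ BlkIdx n a b × BlkIdx n b c where
  toFun f := (lowP n hbc f, highP n hab f)
  invFun p := comb n p.1 p.2
  left_inv f := comb_lowP_highP hab hbc f
  right_inv p := by simp [lowP_comb, highP_comb]

theorem comb_assoc {d : ℕ} (x : BlkIdx n a b) (y : BlkIdx n b c) (z : BlkIdx n c d)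
    (hbc : b ≤ c) :
    comb n (comb n x y) z = comb n x (comb n y z) := by
  funext k
  by_cases h1 : k.1.val < b
  · have h2 : k.1.val < c := lt_of_lt_of_le h1 hbc
    simp [comb, h1, h2]
  · by_cases h2 : k.1.val < c <;> simp [comb, h1, h2]

/-- The column of `v : HS n a c` at `r : BlkIdx n b c`. -/
def col (n : Fin w → ℕ) {a b c : ℕ} (v : HS n a c) (r : BlkIdx n b c) : HS n a b :=
  WithLp.toLp 2 (fun x => v (comb n x r))

theorem col_add (v v' : HS n a c) (r : BlkIdx n b c) :
    col n (v + v') r = col n v r + col n v' r := by ext x; simp [col]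

theorem col_smul (s : ℂ) (v : HS n a c) (r : BlkIdx n b c) :
    col n (s • v) r = s • col n v r := by ext x; simp [col]

theorem inner_col_decomp (hab : a ≤ b) (hbc : b ≤ c) (u v : HS n a c) :
    inner ℂ u v = ∑ r : BlkIdx n b c, (inner ℂ (col n u r) (col n v r) : ℂ) := by
  simp only [PiLp.inner_apply]
  rw [← (combEquiv n hab hbc).symm.sum_comp (fun f => (inner ℂ (u f) (v f) : ℂ))]
  rw [Fintype.sum_prod_type, Finset.sum_comm]
  rfl

end TrimAux

namespace TrimAux

variable {w : ℕ} {n : Fin w → ℕ} {a b c : ℕ}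

theorem euclidean_lin_apply {ι : Type*} [Fintype ι] [DecidableEq ι]
    (X : EuclideanSpace ℂ ι →ₗ[ℂ] EuclideanSpace ℂ ι) (u : EuclideanSpace ℂ ι) (x : ι) :
    X u x = ∑ y, Matrix.toEuclideanLin.symm X x y * u y := by
  conv_lhs => rw [← Matrix.toEuclideanLin.apply_symm_apply X]
  rw [Matrix.toEuclideanLin_apply]
  rfl

theorem extOp_apply (hab : a ≤ b) (hbc : b ≤ c) (X : HS n a b →ₗ[ℂ] HS n a b)
    (v : HS n a c) (f : BlkIdx n a c) :
    extOp n hab hbc X v f = X (col n v (highP n hab f)) (lowP n hbc f) := by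
  rw [show extOp n hab hbc X v f
      = ∑ g, Matrix.toEuclideanLin.symm X (lowP n hbc f) (lowP n hbc g) *
          (if highP n hab f = highP n hab g then 1 else 0) * v g by
    rw [extOp, Matrix.toEuclideanLin_apply]; rfl]
  rw [euclidean_lin_apply]
  rw [← (combEquiv n hab hbc).symm.sum_comp (fun g =>
    Matrix.toEuclideanLin.symm X (lowP n hbc f) (lowP n hbc g) *
          (if highP n hab f = highP n hab g then 1 else 0) * v g)]
  rw [Fintype.sum_prod_type]
  refine Finset.sum_congr rfl fun x _ => ?_
  rw [Finset.sum_eq_single (highP n hab f)]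
  · simp [combEquiv, lowP_comb, highP_comb, col]
  · intro r _ hr
    simp [combEquiv, lowP_comb, highP_comb, hr.symm]
  · simp

theorem col_extOp (hab : a ≤ b) (hbc : b ≤ c) (X : HS n a b →ₗ[ℂ] HS n a b)
    (v : HS n a c) (r : BlkIdx n b c) :
    col n (extOp n hab hbc X v) r = X (col n v r) := by
  ext x
  show extOp n hab hbc X v (comb n x r) = _
  rw [extOp_apply, lowP_comb, highP_comb]

theorem eq_of_col_eq (hab : a ≤ b) (hbc : b ≤ c) {u v : HS n a c}
    (h : ∀ r : BlkIdx n b c, col n u r = col n v r) : u = v := by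
  ext f
  have := congrArg (fun t : HS n a b => t (lowP n hbc f)) (h (highP n hab f))
  simp only [col, WithLp.ofLp_toLp] at this
  rwa [comb_lowP_highP hab hbc] at this

theorem extOp_comp_apply (hab : a ≤ b) (hbc : b ≤ c) (X Y : HS n a b →ₗ[ℂ] HS n a b)
    (v : HS n a c) :
    extOp n hab hbc X (extOp n hab hbc Y v) = extOp n hab hbc (X ∘ₗ Y) v := by
  refine eq_of_col_eq hab hbc fun r => ?_
  rw [col_extOp, col_extOp, col_extOp]
  rfl

theorem extOp_add (hab : a ≤ b) (hbc : b ≤ c) (X Y : HS n a b →ₗ[ℂ] HS n a b)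
    (v : HS n a c) :
    extOp n hab hbc (X + Y) v = extOp n hab hbc X v + extOp n hab hbc Y v := by
  refine eq_of_col_eq hab hbc fun r => ?_
  rw [col_extOp]
  rw [col_add]
  rw [col_extOp, col_extOp]
  rfl

theorem extOp_id (hab : a ≤ b) (hbc : b ≤ c) (v : HS n a c) :
    extOp n hab hbc (LinearMap.id : HS n a b →ₗ[ℂ] HS n a b) v = v := by
  refine eq_of_col_eq hab hbc fun r => ?_
  rw [col_extOp]
  rfl

theorem extOp_sub (hab : a ≤ b) (hbc : b ≤ c) (X Y : HS n a b →ₗ[ℂ] HS n a b)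
    (v : HS n a c) :
    extOp n hab hbc (X - Y) v = extOp n hab hbc X v - extOp n hab hbc Y v := by
  refine eq_of_col_eq hab hbc fun r => ?_
  rw [col_extOp]
  rw [show col n (extOp n hab hbc X v - extOp n hab hbc Y v) r = col n (extOp n hab hbc X v) r - col n (extOp n hab hbc Y v) r by ext x; simp [col]]
  rw [col_extOp, col_extOp]
  rfl

/-- If `X` is symmetric then `X ⊗ id` is symmetric (inner product form). -/
theorem inner_extOp_symm (hab : a ≤ b) (hbc : b ≤ c) {X : HS n a b →ₗ[ℂ] HS n a b}
    (hX : ∀ u v : HS n a b, (inner ℂ (X u) v : ℂ) = inner ℂ u (X v)) (u v : HS n a c) :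
    (inner ℂ (extOp n hab hbc X u) v : ℂ) = inner ℂ u (extOp n hab hbc X v) := by
  rw [inner_col_decomp hab hbc, inner_col_decomp hab hbc]
  refine Finset.sum_congr rfl fun r _ => ?_
  rw [col_extOp, col_extOp, hX]

theorem extOp_tmulB (hab : a ≤ b) (hbc : b ≤ c) (X : HS n a b →ₗ[ℂ] HS n a b)
    (v : HS n a b) (u : HS n b c) :
    extOp n hab hbc X (tmulB n hab hbc v u) = tmulB n hab hbc (X v) u := by
  refine eq_of_col_eq hab hbc fun r => ?_
  rw [col_extOp]
  have h1 : col n (tmulB n hab hbc v u) r = u r • v := by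
    ext x
    show tmulB n hab hbc v u (comb n x r) = u r * v x
    simp only [tmulB, WithLp.ofLp_toLp, lowP_comb, highP_comb]; rw [mul_comm]
  have h2 : col n (tmulB n hab hbc (X v) u) r = u r • (X v) := by
    ext x
    show tmulB n hab hbc (X v) u (comb n x r) = u r * (X v) x
    simp only [tmulB, WithLp.ofLp_toLp, lowP_comb, highP_comb]; rw [mul_comm]
  rw [h1, h2, map_smul]

end TrimAux

namespace TrimAux

variable {w : ℕ} {n : Fin w → ℕ} {a b c : ℕ}
variable {E : Type*} [NormedAddCommGroup E] [InnerProductSpace ℂ E] [FiniteDimensional ℂ E]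

theorem projL_apply (S : Submodule ℂ E) (x : E) :
    projL S x = (S.orthogonalProjectionOnto x : E) := rfl

theorem projL_mem (S : Submodule ℂ E) (x : E) : projL S x ∈ S := (S.orthogonalProjectionOnto x).2

theorem projL_eq_self {S : Submodule ℂ E} {x : E} (hx : x ∈ S) : projL S x = x := by
  rw [projL_apply, Submodule.coe_orthogonalProjectionOnto_apply, Submodule.starProjection_eq_self_iff.2 hx]

theorem projL_symm (S : Submodule ℂ E) (u v : E) :
    (inner ℂ (projL S u) v : ℂ) = inner ℂ u (projL S v) :=
  Submodule.inner_starProjection_left_eq_right S u v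

theorem projL_idem (S : Submodule ℂ E) (x : E) : projL S (projL S x) = projL S x :=
  projL_eq_self (projL_mem S x)

theorem norm_sq_eq_add (S : Submodule ℂ E) (x : E) :
    ‖x‖ ^ 2 = ‖projL S x‖ ^ 2 + ‖x - projL S x‖ ^ 2 := by
  have h := @norm_add_sq ℂ _ _ _ _ (projL S x) (x - projL S x)
  have horth : (inner ℂ (projL S x) (x - projL S x) : ℂ) = 0 := by
    have hm : x - projL S x ∈ Sᗮ := Submodule.sub_starProjection_mem_orthogonal x
    exact (Sᗮ.mem_orthogonal' _ |>.1 ((Submodule.orthogonal_orthogonal S).symm ▸ projL_mem S x) _ hm)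
  rw [add_sub_cancel] at h
  rw [h, horth]
  simp

theorem norm_projL_le (S : Submodule ℂ E) (x : E) : ‖projL S x‖ ≤ ‖x‖ := by
  have h := norm_sq_eq_add S x
  nlinarith [norm_nonneg (x - projL S x), norm_nonneg (projL S x), norm_nonneg x]

theorem mem_extS_iff (hab : a ≤ b) (hbc : b ≤ c) (V : Submodule ℂ (HS n a b))
    (y : HS n a c) :
    y ∈ extS n hab hbc V ↔ ∀ r : BlkIdx n b c, col n y r ∈ V := by
  constructor
  · intro hy
    refine Submodule.span_induction ?_ ?_ ?_ ?_ hy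
    · rintro x ⟨v, hv, u, rfl⟩ r
      have h1 : col n (tmulB n hab hbc v u) r = u r • v := by
        ext x
        show tmulB n hab hbc v u (comb n x r) = u r * v x
        simp only [tmulB, WithLp.ofLp_toLp, lowP_comb, highP_comb]; rw [mul_comm]
      rw [h1]; exact V.smul_mem _ hv
    · intro r; rw [show col n (0 : HS n a c) r = 0 by ext x; simp [col]]; exact V.zero_mem
    · intro x y _ _ hx hy r
      rw [col_add]; exact V.add_mem (hx r) (hy r)
    · intro s x _ hx r
      rw [col_smul]; exact V.smul_mem _ (hx r)
  · intro hcols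
    have hdecomp : y = ∑ r : BlkIdx n b c,
        tmulB n hab hbc (col n y r) (EuclideanSpace.single r (1 : ℂ)) := by
      ext f
      rw [WithLp.ofLp_sum, Finset.sum_apply]
      rw [Finset.sum_eq_single (highP n hab f)]
      · show y f = col n y (highP n hab f) (lowP n hbc f) *
          EuclideanSpace.single (highP n hab f) (1:ℂ) (highP n hab f)
        have h1 : EuclideanSpace.single (highP n hab f) (1:ℂ) (highP n hab f) = 1 := by
          simp [EuclideanSpace.single_apply]
        rw [h1, mul_one]
        show y f = y (comb n (lowP n hbc f) (highP n hab f))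
        rw [comb_lowP_highP]
      · intro r _ hr
        show col n y r (lowP n hbc f) * EuclideanSpace.single r (1:ℂ) (highP n hab f) = 0
        rw [EuclideanSpace.single_apply, if_neg (by exact fun h => hr h.symm)]
        simp
      · simp
    rw [hdecomp]
    exact Submodule.sum_mem _ fun r _ =>
      Submodule.subset_span ⟨col n y r, hcols r, _, rfl⟩

/-- `P_{V ⊗ H} = P_V ⊗ id`. -/
theorem projL_extS (hab : a ≤ b) (hbc : b ≤ c) (V : Submodule ℂ (HS n a b))
    (x : HS n a c) :
    projL (extS n hab hbc V) x = extOp n hab hbc (projL V) x := by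
  rw [projL_apply]
  have hmem : extOp n hab hbc (projL V) x ∈ extS n hab hbc V := by
    rw [mem_extS_iff hab hbc]
    intro r; rw [col_extOp]; exact projL_mem V _
  refine Submodule.eq_starProjection_of_mem_of_inner_eq_zero hmem fun u hu => ?_
  have hfix : extOp n hab hbc (projL V) u = u := by
    refine eq_of_col_eq hab hbc fun r => ?_
    rw [col_extOp]
    exact projL_eq_self ((mem_extS_iff hab hbc V u).1 hu r)
  rw [inner_sub_left]
  rw [show (inner ℂ (extOp n hab hbc (projL V) x) u : ℂ)
      = inner ℂ x (extOp n hab hbc (projL V) u) by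
    exact inner_extOp_symm hab hbc (fun p q => projL_symm V p q) x u]
  rw [hfix, sub_self]

end TrimAux

namespace TrimAux

variable {w : ℕ} {n : Fin w → ℕ} {a b c : ℕ}

theorem em_apply {ι : Type*} [Fintype ι] [DecidableEq ι]
    (X : EuclideanSpace ℂ ι →ₗ[ℂ] EuclideanSpace ℂ ι) (f g : ι) :
    Matrix.toEuclideanLin.symm X f g = X (EuclideanSpace.single g (1 : ℂ)) f := by
  rw [euclidean_lin_apply]
  rw [Finset.sum_eq_single g]
  · simp [EuclideanSpace.single_apply]
  · intro y _ hy; simp [EuclideanSpace.single_apply, hy]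
  · simp

theorem inner_single {ι : Type*} [Fintype ι] [DecidableEq ι]
    (x : EuclideanSpace ℂ ι) (g : ι) :
    (inner ℂ x (EuclideanSpace.single g (1 : ℂ)) : ℂ) = (starRingEnd ℂ) (x g) := by
  rw [PiLp.inner_apply]
  rw [Finset.sum_eq_single g]
  · simp [EuclideanSpace.single_apply]
  · intro y _ hy; simp [EuclideanSpace.single_apply, hy]
  · simp

/-- `ptr b (projL Y)` as a sum of rank-one operators built from the columns of an
orthonormal basis of `Y`. -/
theorem ptr_projL_apply (Y : Submodule ℂ (HS n a c)) (v : HS n a b) :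
    ptr n b (projL Y) v =
      ∑ p : Fin (Module.finrank ℂ Y) × BlkIdx n b c,
        (inner ℂ (col n ((stdOrthonormalBasis ℂ Y) p.1 : HS n a c) p.2) v : ℂ) •
          col n ((stdOrthonormalBasis ℂ Y) p.1 : HS n a c) p.2 := by
  set u := stdOrthonormalBasis ℂ Y
  ext x
  have hstep : ptr n b (projL Y) v x
      = ∑ y, (∑ r : BlkIdx n b c,
          Matrix.toEuclideanLin.symm (projL Y) (comb n x r) (comb n y r)) * v y := by
    rw [ptr, Matrix.toEuclideanLin_apply]; rfl
  have hem : ∀ (f g : BlkIdx n a c),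
      Matrix.toEuclideanLin.symm (projL Y) f g
        = ∑ d, (starRingEnd ℂ) ((u d : HS n a c) g) * (u d : HS n a c) f := by
    intro f g
    rw [em_apply]
    have h1 : projL Y (EuclideanSpace.single g (1:ℂ))
        = ∑ d, (inner ℂ ((u d : HS n a c)) (EuclideanSpace.single g (1:ℂ)) : ℂ) •
            (u d : HS n a c) := by
      rw [projL_apply]
      rw [u.orthogonalProjectionOnto_apply_eq_sum]
      push_cast [Submodule.coe_sum]
      rfl
    rw [h1, WithLp.ofLp_sum, Finset.sum_apply]
    refine Finset.sum_congr rfl fun d _ => ?_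
    rw [inner_single]
    rfl
  rw [hstep]
  rw [WithLp.ofLp_sum, Finset.sum_apply]
  simp only [hem, Finset.sum_mul]
  rw [Finset.sum_comm]
  rw [Fintype.sum_prod_type]
  conv_rhs => rw [Finset.sum_comm]
  refine Finset.sum_congr rfl fun r _ => ?_
  rw [Finset.sum_comm]
  refine Finset.sum_congr rfl fun d _ => ?_
  show _ = (inner ℂ (col n (u d : HS n a c) r) v : ℂ) * col n (u d : HS n a c) r x
  rw [PiLp.inner_apply, Finset.sum_mul]
  refine Finset.sum_congr rfl fun y _ => ?_
  simp only [col, WithLp.ofLp_toLp, RCLike.inner_apply]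
  ring

end TrimAux

namespace TrimAux

variable {E : Type*} [NormedAddCommGroup E] [InnerProductSpace ℂ E] [FiniteDimensional ℂ E]
variable {ι : Type*} [Fintype ι]

local notation "⟪" x ", " y "⟫" => @inner ℂ _ _ x y

omit [FiniteDimensional ℂ E] in
theorem rankOneSum_symm (cfam : ι → E) {ρ : E →ₗ[ℂ] E}
    (hρ : ∀ v, ρ v = ∑ α, ⟪cfam α, v⟫ • cfam α) : ρ.IsSymmetric := by
  intro x y
  rw [hρ, hρ, sum_inner, inner_sum]
  refine Finset.sum_congr rfl fun α _ => ?_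
  rw [inner_smul_left, inner_smul_right, inner_conj_symm, mul_comm, ← inner_conj_symm x]

omit [FiniteDimensional ℂ E] in
theorem rankOneSum_nonneg (cfam : ι → E) {ρ : E →ₗ[ℂ] E}
    (hρ : ∀ v, ρ v = ∑ α, ⟪cfam α, v⟫ • cfam α) (v : E) :
    0 ≤ RCLike.re (⟪v, ρ v⟫) := by
  rw [hρ, inner_sum]
  rw [map_sum]
  refine Finset.sum_nonneg fun α _ => ?_
  rw [inner_smul_right, ← inner_conj_symm (cfam α) v, mul_comm, Complex.mul_conj]
  simpa using Complex.normSq_nonneg _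

omit [FiniteDimensional ℂ E] in
theorem rankOneSum_trace {κ : Type*} [Fintype κ] (cfam : ι → E) {ρ : E →ₗ[ℂ] E}
    (hρ : ∀ v, ρ v = ∑ α, ⟪cfam α, v⟫ • cfam α) (q : OrthonormalBasis κ ℂ E)
    (C : E →ₗ[ℂ] E) :
    ∑ α, ⟪cfam α, C (cfam α)⟫ = ∑ k, ⟪q k, C (ρ (q k))⟫ := by
  have : ∀ k, ⟪q k, C (ρ (q k))⟫ = ∑ α, ⟪cfam α, q k⟫ * ⟪q k, C (cfam α)⟫ := by
    intro k
    rw [hρ, map_sum, inner_sum]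
    refine Finset.sum_congr rfl fun α _ => ?_
    rw [map_smul, inner_smul_right]
  simp only [this]
  rw [Finset.sum_comm]
  refine Finset.sum_congr rfl fun α _ => ?_
  exact (q.sum_inner_mul_inner (cfam α) (C (cfam α))).symm

end TrimAux

namespace TrimAux

variable {E : Type*} [NormedAddCommGroup E] [InnerProductSpace ℂ E] [FiniteDimensional ℂ E]
variable {ι : Type*} [Fintype ι]

local notation "⟪" x ", " y "⟫" => @inner ℂ _ _ x y

theorem inner_projL_self (S : Submodule ℂ E) (x : E) :
    ⟪x, projL S x⟫ = ((‖projL S x‖ : ℂ)) ^ 2 := by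
  have h := inner_self_eq_norm_sq_to_K (𝕜 := ℂ) (projL S x)
  calc ⟪x, projL S x⟫ = ⟪projL S x, projL S x⟫ := by
        conv_lhs => rw [← projL_idem S x]
        rw [← projL_symm]
    _ = ((‖projL S x‖ : ℂ)) ^ 2 := by exact_mod_cast h

theorem norm_sq_projL_eq_sum (S : Submodule ℂ E) (x : E) :
    ((‖projL S x‖ : ℂ)) ^ 2 = ∑ d : Fin (Module.finrank ℂ S),
      ⟪(stdOrthonormalBasis ℂ S d : E), x⟫ * ⟪x, (stdOrthonormalBasis ℂ S d : E)⟫ := by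
  rw [← inner_projL_self]
  have h1 : projL S x = ∑ d, (⟪((stdOrthonormalBasis ℂ S) d : E), x⟫ : ℂ) •
      ((stdOrthonormalBasis ℂ S) d : E) := by
    rw [projL_apply, (stdOrthonormalBasis ℂ S).orthogonalProjectionOnto_apply_eq_sum]
    push_cast [Submodule.coe_sum]
    rfl
  rw [h1, inner_sum]
  refine Finset.sum_congr rfl fun d _ => ?_
  rw [inner_smul_right]

/-- Parseval-type: summing `‖P_V q_k‖²` over an orthonormal basis gives `dim V`. -/
theorem sum_norm_sq_projL {κ : Type*} [Fintype κ] (q : OrthonormalBasis κ ℂ E)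
    (S : Submodule ℂ E) :
    ∑ k, ‖projL S (q k)‖ ^ 2 = Module.finrank ℂ S := by
  have hc : ((∑ k, ‖projL S (q k)‖ ^ 2 : ℝ) : ℂ) = (Module.finrank ℂ S : ℂ) := by
    push_cast
    calc ∑ k, ((‖projL S (q k)‖ : ℂ)) ^ 2
        = ∑ k, ∑ d : Fin (Module.finrank ℂ S),
            ⟪(stdOrthonormalBasis ℂ S d : E), q k⟫ * ⟪q k, (stdOrthonormalBasis ℂ S d : E)⟫ := by
          exact Finset.sum_congr rfl fun k _ => norm_sq_projL_eq_sum S (q k)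
      _ = ∑ d : Fin (Module.finrank ℂ S), ∑ k,
            ⟪(stdOrthonormalBasis ℂ S d : E), q k⟫ * ⟪q k, (stdOrthonormalBasis ℂ S d : E)⟫ :=
          Finset.sum_comm
      _ = ∑ d : Fin (Module.finrank ℂ S), (1 : ℂ) := by
          refine Finset.sum_congr rfl fun d _ => ?_
          rw [q.sum_inner_mul_inner]
          rw [inner_self_eq_norm_sq_to_K]
          have : ‖(stdOrthonormalBasis ℂ S d : E)‖ = 1 := by
            have := (stdOrthonormalBasis ℂ S).orthonormal.1 d
            exact this
          rw [this]; norm_num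
      _ = (Module.finrank ℂ S : ℂ) := by simp
  exact_mod_cast hc

theorem spectral_bound (cfam : ι → E) {ρ : E →ₗ[ℂ] E}
    (hρ : ∀ v, ρ v = ∑ α, ⟪cfam α, v⟫ • cfam α) {ε : ℝ} (hε : 0 < ε)
    (Vs : Submodule ℂ E) :
    ∑ α, ‖projL Vs (cfam α - projL (specGE ρ ε) (cfam α))‖ ^ 2
      ≤ ε * Module.finrank ℂ Vs := by
  classical
  have hsym : ρ.IsSymmetric := rankOneSum_symm cfam hρ
  set q := hsym.eigenvectorBasis (rfl : Module.finrank ℂ E = Module.finrank ℂ E) with hq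
  set lam := hsym.eigenvalues (rfl : Module.finrank ℂ E = Module.finrank ℂ E) with hlam
  set P : E →ₗ[ℂ] E := projL (specGE ρ ε) with hP
  set Qm : E →ₗ[ℂ] E := LinearMap.id - P with hQm
  set Cm : E →ₗ[ℂ] E := Qm ∘ₗ (projL Vs ∘ₗ Qm) with hCm
  have hQapp : ∀ x, Qm x = x - projL (specGE ρ ε) x := fun x => rfl
  have hQsymm : ∀ u v : E, ⟪Qm u, v⟫ = ⟪u, Qm v⟫ := by
    intro u v
    rw [hQapp, hQapp, inner_sub_left, inner_sub_right, projL_symm]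
  have hCq : ∀ x : E, ⟪x, Cm x⟫ = ((‖projL Vs (Qm x)‖ : ℂ)) ^ 2 := by
    intro x
    have : ⟪x, Cm x⟫ = ⟪Qm x, projL Vs (Qm x)⟫ := by
      rw [hCm]
      show ⟪x, Qm (projL Vs (Qm x))⟫ = _
      rw [← hQsymm]
    rw [this, inner_projL_self]
  -- the trace identity
  have hid : ∑ α, ⟪cfam α, Cm (cfam α)⟫ = ∑ k, ⟪q k, Cm (ρ (q k))⟫ :=
    rankOneSum_trace cfam hρ q Cm
  have hRHS : ∀ k, ⟪q k, Cm (ρ (q k))⟫ = ((lam k : ℂ)) * ((‖projL Vs (Qm (q k))‖ : ℂ)) ^ 2 := by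
    intro k
    rw [hsym.apply_eigenvectorBasis, map_smul, inner_smul_right, ← hq, ← hlam, hCq]
    rfl
  -- pass to real parts
  have hreal : ∑ α, ‖projL Vs (Qm (cfam α))‖ ^ 2
      = ∑ k, lam k * ‖projL Vs (Qm (q k))‖ ^ 2 := by
    have := congrArg Complex.re hid
    rw [Complex.re_sum, Complex.re_sum] at this
    calc ∑ α, ‖projL Vs (Qm (cfam α))‖ ^ 2
        = ∑ α, (⟪cfam α, Cm (cfam α)⟫).re := by
          refine Finset.sum_congr rfl fun α _ => ?_
          rw [hCq]; norm_cast
      _ = ∑ k, (⟪q k, Cm (ρ (q k))⟫).re := this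
      _ = ∑ k, lam k * ‖projL Vs (Qm (q k))‖ ^ 2 := by
          refine Finset.sum_congr rfl fun k _ => ?_
          rw [hRHS]
          norm_cast
  -- bound each eigen-term
  have hterm : ∀ k, lam k * ‖projL Vs (Qm (q k))‖ ^ 2 ≤ ε * ‖projL Vs (q k)‖ ^ 2 := by
    intro k
    have hqknorm : ‖q k‖ = 1 := by simpa using q.orthonormal.1 k
    by_cases hk : ε ≤ lam k
    · have hmem : q k ∈ specGE ρ ε := by
        have h1 : q k ∈ Module.End.eigenspace ρ ((lam k : ℝ) : ℂ) := by
          rw [Module.End.mem_eigenspace_iff]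
          exact hsym.apply_eigenvectorBasis rfl k
        exact le_iSup (fun c : {c : ℝ // ε ≤ c} =>
          Module.End.eigenspace ρ ((c : ℝ) : ℂ)) ⟨lam k, hk⟩ h1
      have : Qm (q k) = 0 := by rw [hQapp, projL_eq_self hmem, sub_self]
      rw [this, map_zero]
      simp only [norm_zero]
      have : lam k * (0:ℝ) ^ 2 = 0 := by ring
      rw [this]
      positivity
    · push_neg at hk
      have hperp : q k ∈ (specGE ρ ε)ᗮ := by
        rw [specGE, ← Submodule.iInf_orthogonal]
        rw [Submodule.mem_iInf]
        intro c
        rw [Submodule.mem_orthogonal]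
        intro x hx
        have hne : ((c : ℝ) : ℂ) ≠ ((lam k : ℝ) : ℂ) := by
          intro h
          have := Complex.ofReal_injective h
          have hcε : ε ≤ (c : ℝ) := c.2
          linarith
        have hmemk : q k ∈ Module.End.eigenspace ρ ((lam k : ℝ) : ℂ) := by
          rw [Module.End.mem_eigenspace_iff]
          exact hsym.apply_eigenvectorBasis rfl k
        exact hsym.orthogonalFamily_eigenspaces hne ⟨x, hx⟩ ⟨q k, hmemk⟩
      have h0 : projL (specGE ρ ε) (q k) = 0 := by
        rw [projL_apply]
        rw [Submodule.orthogonalProjectionOnto_apply_of_mem_orthogonal hperp]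
        rfl
      have hQ : Qm (q k) = q k := by rw [hQapp, h0, sub_zero]
      rw [hQ]
      have hlamnn : 0 ≤ lam k := by
        have h1 := rankOneSum_nonneg cfam hρ (q k)
        have h2 : ⟪q k, ρ (q k)⟫ = ((lam k : ℝ) : ℂ) := by
          rw [hsym.apply_eigenvectorBasis rfl k, inner_smul_right, ← hlam,
            inner_self_eq_norm_sq_to_K, hqknorm]
          norm_num
        rw [h2] at h1
        simpa using h1
      exact mul_le_mul_of_nonneg_right (le_of_lt hk) (sq_nonneg _)
  calc ∑ α, ‖projL Vs (cfam α - projL (specGE ρ ε) (cfam α))‖ ^ 2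
      = ∑ α, ‖projL Vs (Qm (cfam α))‖ ^ 2 := rfl
    _ = ∑ k, lam k * ‖projL Vs (Qm (q k))‖ ^ 2 := hreal
    _ ≤ ∑ k, ε * ‖projL Vs (q k)‖ ^ 2 := Finset.sum_le_sum fun k _ => hterm k
    _ = ε * ∑ k, ‖projL Vs (q k)‖ ^ 2 := by rw [Finset.mul_sum]
    _ = ε * Module.finrank ℂ Vs := by rw [sum_norm_sq_projL]

end TrimAux

namespace TrimAux

variable {w : ℕ} {n : Fin w → ℕ} {a b c d : ℕ}

theorem norm_sq_col (hab : a ≤ b) (hbc : b ≤ c) (v : HS n a c) :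
    ‖v‖ ^ 2 = ∑ r : BlkIdx n b c, ‖col n v r‖ ^ 2 := by
  have hre : ∀ {ι : Type} [Fintype ι] (u : EuclideanSpace ℂ ι), (inner ℂ u u : ℂ).re = ‖u‖ ^ 2 :=
    fun u => by rw [← RCLike.re_to_complex]; exact inner_self_eq_norm_sq u
  have h := congrArg Complex.re (inner_col_decomp hab hbc v v)
  rw [Complex.re_sum] at h
  rw [← hre v, h]
  exact Finset.sum_congr rfl fun r _ => hre _

theorem col_col (hbc : b ≤ c) (v : HS n a d) (sB : BlkIdx n c d) (m : BlkIdx n b c) :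
    col n (col n v sB) m = col n v (comb n m sB) := by
  ext x
  exact congrArg v.ofLp (comb_assoc x m sB hbc)

theorem lowP_comb_left (hbc : b ≤ c) (hcd : c ≤ d) (x : BlkIdx n a c) (yy : BlkIdx n c d) :
    lowP n (hbc.trans hcd) (comb n x yy) = lowP n hbc x := by
  funext k
  simp [lowP, comb, lt_of_lt_of_le k.2.2 hbc]

theorem highP_comb_left (hab : a ≤ b) (x : BlkIdx n a c) (yy : BlkIdx n c d) :
    highP n hab (comb n x yy) = comb n (highP n hab x) yy := by
  funext k
  by_cases h : k.1.val < c <;> simp [comb, highP, h]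

theorem col_extOp_lower (hab : a ≤ b) (hbc : b ≤ c) (hcd : c ≤ d)
    (X : HS n a b →ₗ[ℂ] HS n a b) (v : HS n a d) (sB : BlkIdx n c d) :
    col n (extOp n hab (hbc.trans hcd) X v) sB = extOp n hab hbc X (col n v sB) := by
  ext x
  show extOp n hab (hbc.trans hcd) X v (comb n x sB) = _
  rw [extOp_apply, extOp_apply]
  rw [lowP_comb_left hbc hcd, highP_comb_left hab, col_col hbc]

variable {E : Type*} [NormedAddCommGroup E] [InnerProductSpace ℂ E] [FiniteDimensional ℂ E]

theorem proj_lower_bound (S : Submodule ℂ E) (z u : E) (hu : u ∈ S) (hu1 : ‖u‖ ≤ 1) :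
    (inner ℂ u z : ℂ).re ≤ ‖projL S z‖ := by
  have hsplit : (inner ℂ u z : ℂ) = inner ℂ u (projL S z) := by
    have h0 : (inner ℂ u (z - projL S z) : ℂ) = 0 :=
      (Submodule.mem_orthogonal S (z - projL S z)).1
        (Submodule.sub_starProjection_mem_orthogonal z) u hu
    have := inner_sub_right (𝕜 := ℂ) u z (projL S z)
    rw [h0] at this
    linear_combination -this
  rw [hsplit]
  calc (inner ℂ u (projL S z) : ℂ).re ≤ ‖(inner ℂ u (projL S z) : ℂ)‖ :=
        Complex.re_le_norm _
    _ ≤ ‖u‖ * ‖projL S z‖ := norm_inner_le_norm u _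
    _ ≤ 1 * ‖projL S z‖ := by
        exact mul_le_mul_of_nonneg_right hu1 (norm_nonneg _)
    _ = ‖projL S z‖ := one_mul _

theorem norm_sub_projL_le (S : Submodule ℂ E) (u : E) : ‖u - projL S u‖ ≤ ‖u‖ := by
  have h := norm_sq_eq_add S u
  nlinarith [norm_nonneg (u - projL S u), norm_nonneg (projL S u), norm_nonneg u]

theorem norm_extOp_le (hab : a ≤ b) (hbc : b ≤ c) (X : HS n a b →ₗ[ℂ] HS n a b)
    (hX : ∀ u, ‖X u‖ ≤ ‖u‖) (v : HS n a c) :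
    ‖extOp n hab hbc X v‖ ≤ ‖v‖ := by
  have h1 : ‖extOp n hab hbc X v‖ ^ 2 ≤ ‖v‖ ^ 2 := by
    rw [norm_sq_col hab hbc, norm_sq_col hab hbc v]
    refine Finset.sum_le_sum fun r _ => ?_
    rw [col_extOp]
    have := hX (col n v r)
    nlinarith [norm_nonneg (X (col n v r)), norm_nonneg (col n v r)]
  nlinarith [norm_nonneg (extOp n hab hbc X v), norm_nonneg v]

end TrimAux

namespace TrimAux

variable {w : ℕ} {n : Fin w → ℕ} {a b c d : ℕ}
variable {E : Type*} [NormedAddCommGroup E] [InnerProductSpace ℂ E] [FiniteDimensional ℂ E]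

theorem norm_sq_projL_eq_sum_re (S : Submodule ℂ E) (x : E) :
    ‖projL S x‖ ^ 2 = ∑ d : Fin (Module.finrank ℂ S),
      ‖(inner ℂ ((stdOrthonormalBasis ℂ S d : E)) x : ℂ)‖ ^ 2 := by
  have h := congrArg Complex.re (norm_sq_projL_eq_sum S x)
  have hL : (((‖projL S x‖ : ℂ)) ^ 2).re = ‖projL S x‖ ^ 2 := by norm_cast
  rw [hL, Complex.re_sum] at h
  rw [h]
  refine Finset.sum_congr rfl fun d _ => ?_
  rw [← inner_conj_symm x, Complex.mul_conj]
  simp only [Complex.normSq_eq_norm_sq]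
  norm_cast

/-- Sub-lemma A: for `u ∈ Y`, `‖(B ⊗ id) u‖² ≤ ‖u‖² · G` where `G` is the sum of
`‖(B ⊗ id) u_d‖²` over an orthonormal basis of `Y`. -/
theorem ext_norm_le_G (hab : a ≤ b) (hbc : b ≤ c) (Bm : HS n a b →ₗ[ℂ] HS n a b)
    (Y : Submodule ℂ (HS n a c)) {u : HS n a c} (hu : u ∈ Y) :
    ‖extOp n hab hbc Bm u‖ ^ 2 ≤ ‖u‖ ^ 2 *
      ∑ d : Fin (Module.finrank ℂ Y),
        ‖extOp n hab hbc Bm ((stdOrthonormalBasis ℂ Y d : HS n a c))‖ ^ 2 := by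
  set ub := stdOrthonormalBasis ℂ Y with hub
  have hu_exp : u = ∑ d, (inner ℂ ((ub d : HS n a c)) u : ℂ) • (ub d : HS n a c) := by
    conv_lhs => rw [← projL_eq_self hu]
    rw [projL_apply, ub.orthogonalProjectionOnto_apply_eq_sum]
    push_cast [Submodule.coe_sum]
    rfl
  have hmap : extOp n hab hbc Bm u
      = ∑ d, (inner ℂ ((ub d : HS n a c)) u : ℂ) • extOp n hab hbc Bm (ub d : HS n a c) := by
    conv_lhs => rw [hu_exp]
    rw [map_sum]
    exact Finset.sum_congr rfl fun d _ => map_smul _ _ _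
  have hnorm : ‖extOp n hab hbc Bm u‖
      ≤ ∑ d, ‖(inner ℂ ((ub d : HS n a c)) u : ℂ)‖ *
          ‖extOp n hab hbc Bm (ub d : HS n a c)‖ := by
    rw [hmap]
    refine le_trans (norm_sum_le _ _) ?_
    exact Finset.sum_le_sum fun d _ => le_of_eq (norm_smul _ _)
  have hsq : ‖extOp n hab hbc Bm u‖ ^ 2
      ≤ (∑ d, ‖(inner ℂ ((ub d : HS n a c)) u : ℂ)‖ *
          ‖extOp n hab hbc Bm (ub d : HS n a c)‖) ^ 2 := by
    have h0 : (0:ℝ) ≤ ‖extOp n hab hbc Bm u‖ := norm_nonneg _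
    nlinarith [hnorm]
  refine le_trans hsq ?_
  refine le_trans (Finset.sum_mul_sq_le_sq_mul_sq _ _ _) ?_
  have hparseval : ∑ d, ‖(inner ℂ ((ub d : HS n a c)) u : ℂ)‖ ^ 2 = ‖u‖ ^ 2 := by
    rw [← norm_sq_projL_eq_sum_re, projL_eq_self hu]
  rw [hparseval]

end TrimAux

namespace TrimAux

variable {w : ℕ} {n : Fin w → ℕ}

theorem term1_core {i j : ℕ} (hij : i ≤ j) (hjw : j ≤ w) (Y : Submodule ℂ (HS n 0 j))
    (Vs : Submodule ℂ (HS n 0 i)) {ε : ℝ} (hε : 0 < ε) (y : HS n 0 w)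
    (hycols : ∀ sB : BlkIdx n j w, col n y sB ∈ Y) :
    ‖extOp n (Nat.zero_le i) (hij.trans hjw)
        ((projL Vs) ∘ₗ (LinearMap.id - projL (specGE (ptr n i (projL Y)) ε))) y‖ ^ 2
      ≤ ‖y‖ ^ 2 * (ε * Module.finrank ℂ Vs) := by
  set Bm := (projL Vs) ∘ₗ (LinearMap.id - projL (specGE (ptr n i (projL Y)) ε)) with hBm
  set G := ∑ d : Fin (Module.finrank ℂ Y),
      ‖extOp n (Nat.zero_le i) hij Bm ((stdOrthonormalBasis ℂ Y d : HS n 0 j))‖ ^ 2 with hG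
  have hGnn : 0 ≤ G := Finset.sum_nonneg fun d _ => sq_nonneg _
  have hGbound : G ≤ ε * Module.finrank ℂ Vs := by
    have hG2 : G = ∑ p : Fin (Module.finrank ℂ Y) × BlkIdx n i j,
        ‖projL Vs (col n ((stdOrthonormalBasis ℂ Y p.1 : HS n 0 j)) p.2
          - projL (specGE (ptr n i (projL Y)) ε)
              (col n ((stdOrthonormalBasis ℂ Y p.1 : HS n 0 j)) p.2))‖ ^ 2 := by
      rw [hG, Fintype.sum_prod_type]
      refine Finset.sum_congr rfl fun d _ => ?_
      rw [norm_sq_col (Nat.zero_le i) hij]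
      refine Finset.sum_congr rfl fun m _ => ?_
      rw [col_extOp]
      rfl
    rw [hG2]
    exact spectral_bound _ (fun v => ptr_projL_apply Y v) hε Vs
  calc ‖extOp n (Nat.zero_le i) (hij.trans hjw) Bm y‖ ^ 2
      = ∑ r : BlkIdx n i w, ‖Bm (col n y r)‖ ^ 2 := by
        rw [norm_sq_col (Nat.zero_le i) (hij.trans hjw)]
        exact Finset.sum_congr rfl fun r _ => by rw [col_extOp]
    _ = ∑ p : BlkIdx n i j × BlkIdx n j w, ‖Bm (col n y (comb n p.1 p.2))‖ ^ 2 := by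
        rw [← (combEquiv n hij hjw).symm.sum_comp (fun r => ‖Bm (col n y r)‖ ^ 2)]
        rfl
    _ = ∑ sB : BlkIdx n j w, ∑ m : BlkIdx n i j, ‖Bm (col n y (comb n m sB))‖ ^ 2 := by
        rw [Fintype.sum_prod_type, Finset.sum_comm]
    _ = ∑ sB : BlkIdx n j w, ‖extOp n (Nat.zero_le i) hij Bm (col n y sB)‖ ^ 2 := by
        refine Finset.sum_congr rfl fun sB _ => ?_
        rw [norm_sq_col (Nat.zero_le i) hij]
        refine Finset.sum_congr rfl fun m _ => ?_
        rw [col_extOp, col_col hij]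
    _ ≤ ∑ sB : BlkIdx n j w, ‖col n y sB‖ ^ 2 * G := by
        refine Finset.sum_le_sum fun sB _ => ?_
        exact ext_norm_le_G (Nat.zero_le i) hij Bm Y (hycols sB)
    _ = (∑ sB : BlkIdx n j w, ‖col n y sB‖ ^ 2) * G := by rw [Finset.sum_mul]
    _ = ‖y‖ ^ 2 * G := by rw [← norm_sq_col (Nat.zero_le j) hjw]
    _ ≤ ‖y‖ ^ 2 * (ε * Module.finrank ℂ Vs) :=
        mul_le_mul_of_nonneg_left hGbound (sq_nonneg _)

end TrimAux

namespace TrimAux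

variable {w : ℕ} {n : Fin w → ℕ}

set_option maxHeartbeats 2000000 in
theorem step_bound {i j : ℕ} (hi1 : 1 ≤ i) (hij : i ≤ j) (hjw : j ≤ w)
    (Y : Submodule ℂ (HS n 0 j)) (Vs : Submodule ℂ (HS n 0 i))
    {ε α : ℝ} (hε : 0 < ε) (hα : 0 ≤ α) {V : ℕ} (hdim : Module.finrank ℂ Vs ≤ V)
    (z : HS n 0 w) (hz : ‖z‖ = 1)
    (hVz : 1 - α ≤ ‖projL (extS n (Nat.zero_le i) (hij.trans hjw) Vs) z‖ ^ 2) :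
    ‖projL (extS n (Nat.zero_le j) hjw Y) z‖ - (Real.sqrt (ε * V) + Real.sqrt α)
      ≤ ‖projL (extS n (Nat.zero_le j) hjw (trimAt n j ε i hij Y)) z‖ := by
  have hεV : (0:ℝ) ≤ ε * V := by positivity
  set s : ℝ := Real.sqrt (ε * V) + Real.sqrt α with hs
  have hs0 : 0 ≤ s := by rw [hs]; positivity
  set t : ℝ := ‖projL (extS n (Nat.zero_le j) hjw Y) z‖ with ht
  by_cases hts : t ≤ s
  · have h0 := norm_nonneg (projL (extS n (Nat.zero_le j) hjw (trimAt n j ε i hij Y)) z)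
    linarith
  push_neg at hts
  have ht0 : 0 < t := lt_of_le_of_lt hs0 hts
  set y := projL (extS n (Nat.zero_le j) hjw Y) z with hy
  have hymem : y ∈ extS n (Nat.zero_le j) hjw Y := projL_mem _ z
  have hycols : ∀ sB : BlkIdx n j w, col n y sB ∈ Y :=
    (mem_extS_iff (Nat.zero_le j) hjw Y y).1 hymem
  have hyn : ‖y‖ = t := rfl
  have ht1 : t ≤ 1 := by
    rw [ht, ← hz]; exact norm_projL_le _ z
  set Pp : HS n 0 i →ₗ[ℂ] HS n 0 i := projL (specGE (ptr n i (projL Y)) ε) with hPp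
  set yplus := extOp n (Nat.zero_le i) (hij.trans hjw) Pp y with hyp
  -- membership of yplus in the trimmed extension
  have hypmem : yplus ∈ extS n (Nat.zero_le j) hjw (trimAt n j ε i hij Y) := by
    rw [mem_extS_iff (Nat.zero_le j) hjw]
    intro sB
    rw [hyp, col_extOp_lower (Nat.zero_le i) hij hjw]
    exact Submodule.mem_map_of_mem (hycols sB)
  have hypnorm : ‖yplus‖ ≤ t := by
    rw [hyp, ← hyn]
    exact norm_extOp_le _ _ Pp (fun u => norm_projL_le _ u) y
  -- re ⟪y, z⟫ = t²
  have hyz_re : (inner ℂ y z : ℂ).re = t ^ 2 := by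
    have h1 : (inner ℂ z y : ℂ) = ((‖y‖ : ℂ)) ^ 2 := inner_projL_self _ z
    have h2 : (inner ℂ y z : ℂ).re = (inner ℂ z y : ℂ).re := by
      rw [← RCLike.re_to_complex, ← RCLike.re_to_complex]
      exact inner_re_symm y z
    rw [h2, h1, hyn]
    norm_cast
  -- the minus part
  set Qm : HS n 0 i →ₗ[ℂ] HS n 0 i := LinearMap.id - Pp with hQm
  set Rm : HS n 0 i →ₗ[ℂ] HS n 0 i := LinearMap.id - projL Vs with hRm
  set yminus := extOp n (Nat.zero_le i) (hij.trans hjw) Qm y with hym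
  have hsplit : yplus = y - yminus := by
    rw [hym, hQm, extOp_sub, extOp_id]
    abel
  -- Term 2 bound
  have hQnorm : ∀ u : HS n 0 i, ‖Qm u‖ ≤ ‖u‖ := by
    intro u
    show ‖u - projL (specGE (ptr n i (projL Y)) ε) u‖ ≤ ‖u‖
    exact norm_sub_projL_le _ u
  have hterm2 : ‖(inner ℂ (extOp n (Nat.zero_le i) (hij.trans hjw)
      (Rm ∘ₗ Qm) y) z : ℂ)‖ ≤ t * Real.sqrt α := by
    have hcomp : extOp n (Nat.zero_le i) (hij.trans hjw) (Rm ∘ₗ Qm) y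
        = extOp n (Nat.zero_le i) (hij.trans hjw) Rm
            (extOp n (Nat.zero_le i) (hij.trans hjw) Qm y) :=
      (extOp_comp_apply _ _ _ _ y).symm
    have hsymPv : ∀ u v : HS n 0 i,
        (inner ℂ (Rm u) v : ℂ) = inner ℂ u (Rm v) := by
      intro u v
      show (inner ℂ (u - projL Vs u) v : ℂ) = inner ℂ u (v - projL Vs v)
      rw [inner_sub_left, inner_sub_right, projL_symm]
    have hmove : (inner ℂ (extOp n (Nat.zero_le i) (hij.trans hjw)
          (Rm ∘ₗ Qm) y) z : ℂ)
        = inner ℂ (extOp n (Nat.zero_le i) (hij.trans hjw) Qm y)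
            (extOp n (Nat.zero_le i) (hij.trans hjw) Rm z) := by
      rw [hcomp]
      exact inner_extOp_symm _ _ hsymPv _ z
    rw [hmove]
    have hb1 : ‖extOp n (Nat.zero_le i) (hij.trans hjw) Qm y‖ ≤ t := by
      rw [← hyn]; exact norm_extOp_le _ _ Qm hQnorm y
    have hb2 : ‖extOp n (Nat.zero_le i) (hij.trans hjw) Rm z‖
        ≤ Real.sqrt α := by
      have heq : extOp n (Nat.zero_le i) (hij.trans hjw) Rm z
          = z - projL (extS n (Nat.zero_le i) (hij.trans hjw) Vs) z := by
        rw [extOp_sub, extOp_id, projL_extS]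
      rw [heq]
      have hle : ‖z - projL (extS n (Nat.zero_le i) (hij.trans hjw) Vs) z‖ ^ 2 ≤ α := by
        have hdecomp := norm_sq_eq_add (extS n (Nat.zero_le i) (hij.trans hjw) Vs) z
        rw [hz] at hdecomp
        nlinarith [hVz]
      nlinarith [Real.sq_sqrt hα, Real.sqrt_nonneg α,
        norm_nonneg (z - projL (extS n (Nat.zero_le i) (hij.trans hjw) Vs) z)]
    calc ‖(inner ℂ (extOp n (Nat.zero_le i) (hij.trans hjw) Qm y)
            (extOp n (Nat.zero_le i) (hij.trans hjw) Rm z) : ℂ)‖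
        ≤ ‖extOp n (Nat.zero_le i) (hij.trans hjw) Qm y‖ *
            ‖extOp n (Nat.zero_le i) (hij.trans hjw) Rm z‖ :=
          norm_inner_le_norm _ _
      _ ≤ t * Real.sqrt α := by
          refine mul_le_mul hb1 hb2 (norm_nonneg _) (le_of_lt ht0)
  -- Term 1 bound
  have hterm1 : ‖(inner ℂ (extOp n (Nat.zero_le i) (hij.trans hjw)
      ((projL Vs) ∘ₗ Qm) y) z : ℂ)‖ ≤ t * Real.sqrt (ε * V) := by
    have hcore := term1_core hij hjw Y Vs hε y hycols
    rw [hyn] at hcore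
    have hVle : (Module.finrank ℂ Vs : ℝ) ≤ (V : ℝ) := by exact_mod_cast hdim
    have hcore2 : ‖extOp n (Nat.zero_le i) (hij.trans hjw) ((projL Vs) ∘ₗ Qm) y‖ ^ 2
        ≤ t ^ 2 * (ε * V) := by
      refine le_trans hcore ?_
      have : ε * (Module.finrank ℂ Vs : ℝ) ≤ ε * V :=
        mul_le_mul_of_nonneg_left hVle (le_of_lt hε)
      nlinarith [sq_nonneg t]
    have hnormle : ‖extOp n (Nat.zero_le i) (hij.trans hjw) ((projL Vs) ∘ₗ Qm) y‖
        ≤ t * Real.sqrt (ε * V) := by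
      nlinarith [Real.sq_sqrt hεV, Real.sqrt_nonneg (ε * V), ht0,
        norm_nonneg (extOp n (Nat.zero_le i) (hij.trans hjw) ((projL Vs) ∘ₗ Qm) y),
        mul_nonneg (le_of_lt ht0) (Real.sqrt_nonneg (ε * V))]
    calc ‖(inner ℂ (extOp n (Nat.zero_le i) (hij.trans hjw) ((projL Vs) ∘ₗ Qm) y) z : ℂ)‖
        ≤ ‖extOp n (Nat.zero_le i) (hij.trans hjw) ((projL Vs) ∘ₗ Qm) y‖ * ‖z‖ :=
          norm_inner_le_norm _ _
      _ = ‖extOp n (Nat.zero_le i) (hij.trans hjw) ((projL Vs) ∘ₗ Qm) y‖ := by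
          rw [hz, mul_one]
      _ ≤ t * Real.sqrt (ε * V) := hnormle
  -- splitting yminus
  have hQsplit : Qm = (projL Vs) ∘ₗ Qm + Rm ∘ₗ Qm := by
    refine LinearMap.ext fun x => ?_
    show Qm x = projL Vs (Qm x) + (Qm x - projL Vs (Qm x))
    abel
  have hymsplit : yminus = extOp n (Nat.zero_le i) (hij.trans hjw) ((projL Vs) ∘ₗ Qm) y
      + extOp n (Nat.zero_le i) (hij.trans hjw) (Rm ∘ₗ Qm) y := by
    rw [hym]
    conv_lhs => rw [hQsplit]
    exact extOp_add _ _ _ _ y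
  have hyminner : ‖(inner ℂ yminus z : ℂ)‖ ≤ t * Real.sqrt (ε * V) + t * Real.sqrt α := by
    rw [hymsplit, inner_add_left]
    refine le_trans (norm_add_le _ _) ?_
    exact add_le_add hterm1 hterm2
  -- lower bound on re ⟪yplus, z⟫
  have hplus_re : t * (t - s) ≤ (inner ℂ yplus z : ℂ).re := by
    rw [hsplit, inner_sub_left]
    have h1 : ((inner ℂ y z : ℂ) - (inner ℂ yminus z : ℂ)).re
        = (inner ℂ y z : ℂ).re - (inner ℂ yminus z : ℂ).re := by
      simp [Complex.sub_re]
    rw [h1, hyz_re]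
    have h2 : (inner ℂ yminus z : ℂ).re ≤ ‖(inner ℂ yminus z : ℂ)‖ := by
      exact Complex.re_le_norm _
    have h3 : (inner ℂ yminus z : ℂ).re ≤ t * Real.sqrt (ε * V) + t * Real.sqrt α :=
      le_trans h2 hyminner
    rw [hs]
    nlinarith [h3]
  have hre_pos : 0 < (inner ℂ yplus z : ℂ).re :=
    lt_of_lt_of_le (by nlinarith [hts, ht0]) hplus_re
  have hyppos : 0 < ‖yplus‖ := by
    rcases eq_or_ne yplus 0 with h | h
    · rw [h] at hre_pos; simp at hre_pos
    · exact norm_pos_iff.2 h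
  -- the unit vector
  set uvec : HS n 0 w := ((((‖yplus‖)⁻¹ : ℝ) : ℂ)) • yplus with huvec
  have humem : uvec ∈ extS n (Nat.zero_le j) hjw (trimAt n j ε i hij Y) :=
    Submodule.smul_mem _ _ hypmem
  have hunorm : ‖uvec‖ = 1 := by
    rw [huvec, norm_smul]
    rw [Complex.norm_real, Real.norm_eq_abs, abs_inv, abs_of_pos hyppos]
    exact inv_mul_cancel₀ (ne_of_gt hyppos)
  have hured : (inner ℂ uvec z : ℂ).re = (‖yplus‖)⁻¹ * (inner ℂ yplus z : ℂ).re := by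
    rw [huvec, inner_smul_left]
    rw [Complex.conj_ofReal]
    exact Complex.re_ofReal_mul _ _
  have hfinal : t - s ≤ (inner ℂ uvec z : ℂ).re := by
    rw [hured]
    have hstep : (t - s) * ‖yplus‖ ≤ (inner ℂ yplus z : ℂ).re := by
      have h1 : (t - s) * ‖yplus‖ ≤ (t - s) * t :=
        mul_le_mul_of_nonneg_left hypnorm (by linarith)
      have h2 : (t - s) * t = t * (t - s) := by ring
      linarith [hplus_re]
    rw [← div_eq_inv_mul]
    rw [le_div_iff₀ hyppos]
    exact hstep
  exact le_trans hfinal (proj_lower_bound _ z uvec humem (le_of_eq hunorm))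

end TrimAux

set_option maxHeartbeats 2000000

/-- Iterated trimming lemma: if for each cut `i < j` some `≤V`-dimensional subspace of
`H_{[1,i]}` is `α`-viable for `Z`, and `Y ⊆ H_{[1,j]}` satisfies
`‖P_{Y ⊗ H_{[j+1,w]}} z‖ ≥ 1-δ` on unit vectors of `Z`, then the fully trimmed subspace
`Trim_ε(Y)` satisfies `‖P_{Trim_ε(Y) ⊗ H_{[j+1,w]}} z‖ ≥ 1 - δ - (j-1)(√(εV) + √α)`. -/
theorem iterated_trimming {w : ℕ} (n : Fin w → ℕ) (j : ℕ) (hj1 : 1 ≤ j) (hjw : j ≤ w)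
    (Z : Submodule ℂ (HS n 0 w)) (ε : ℝ) (hε : 0 < ε)
    (V : ℕ) (α δ : ℝ) (hα : 0 ≤ α) (hδ : 0 ≤ δ)
    (hV : ∀ (i : ℕ) (_ : 1 ≤ i) (h2 : i < j), ∃ Vi : Submodule ℂ (HS n 0 i),
      Module.finrank ℂ Vi ≤ V ∧
      ∀ z ∈ Z, ‖z‖ = 1 →
        1 - α ≤
          ‖(Submodule.orthogonalProjectionOnto
              (extS n (Nat.zero_le i) (le_trans (le_of_lt h2) hjw) Vi) z : HS n 0 w)‖ ^ 2)
    (Y : Submodule ℂ (HS n 0 j))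
    (hY : ∀ z ∈ Z, ‖z‖ = 1 →
      1 - δ ≤ ‖(Submodule.orthogonalProjectionOnto (extS n (Nat.zero_le j) hjw Y) z : HS n 0 w)‖) :
    ∀ z ∈ Z, ‖z‖ = 1 →
      1 - δ - ((j : ℝ) - 1) * (Real.sqrt (ε * V) + Real.sqrt α) ≤
        ‖(Submodule.orthogonalProjectionOnto
            (extS n (Nat.zero_le j) hjw (trimSeq n j ε Y (j - 1))) z : HS n 0 w)‖ := by
  intro z hzZ hz
  have main : ∀ c : ℕ, c ≤ j - 1 →
      1 - δ - (c : ℝ) * (Real.sqrt (ε * V) + Real.sqrt α)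
        ≤ ‖projL (extS n (Nat.zero_le j) hjw (trimSeq n j ε Y c)) z‖ := by
    intro c
    induction c with
    | zero =>
      intro _
      have := hY z hzZ hz
      simp only [trimSeq, Nat.cast_zero, zero_mul, sub_zero]
      exact this
    | succ c ih =>
      intro hc1
      have hprev := ih (by omega)
      have hi1 : 1 ≤ j - 1 - c := by omega
      have hij : j - 1 - c ≤ j := by omega
      have hilt : j - 1 - c < j := by omega
      obtain ⟨Vi, hViDim, hViZ⟩ := hV (j - 1 - c) hi1 hilt
      have hVz : 1 - α ≤ ‖projL
          (extS n (Nat.zero_le (j - 1 - c)) (hij.trans hjw) Vi) z‖ ^ 2 :=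
        hViZ z hzZ hz
      have hstep := TrimAux.step_bound hi1 hij hjw (trimSeq n j ε Y c) Vi hε hα hViDim
        z hz hVz
      have hgoal : trimSeq n j ε Y (c + 1)
          = trimAt n j ε (j - 1 - c) hij (trimSeq n j ε Y c) := rfl
      rw [hgoal]
      push_cast
      linarith [hstep, hprev]
  have hfin := main (j - 1) le_rfl
  have hcast : ((j - 1 : ℕ) : ℝ) = (j : ℝ) - 1 := by
    have := Nat.cast_sub hj1 (R := ℝ)
    simpa using this
  rw [hcast] at hfin
  exact hfin
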